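/- For a fixed ε > 0, the approximate outage penalty U_ν(x, ε) is nondecreasing in |x|: if 0 ≤ x₁ ≤ x₂ then U_ν(x₁, ε) ≤ U_ν(x₂, ε), for every ν > 0. -/
import Mathlib

lemma aux_rewrite (ν c x : ℝ) :
    (1 + Real.exp (-ν * (x - c)))⁻¹ + (1 - (1 + Real.exp (-ν * (x + c)))⁻¹)
      = Real.exp (ν * x) / (Real.exp (ν * x) + Real.exp (ν * c))
        + 1 / (1 + Real.exp (ν * x) * Real.exp (ν * c)) := by
  have h1 : Real.exp (-ν * (x - c)) = Real.exp (ν * c) / Real.exp (ν * x) := by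
    rw [← Real.exp_sub]; ring_nf
  have h2 : Real.exp (-ν * (x + c)) = 1 / (Real.exp (ν * x) * Real.exp (ν * c)) := by
    rw [← Real.exp_add, one_div, ← Real.exp_neg]; ring_nf
  have hu := Real.exp_pos (ν * x)
  have hk := Real.exp_pos (ν * c)
  rw [h1, h2]
  field_simp
  ring

lemma aux_mono (k u1 u2 : ℝ) (hk : 1 ≤ k) (h1 : 1 ≤ u1) (h : u1 ≤ u2) :
    u1 / (u1 + k) + 1 / (1 + u1 * k) ≤ u2 / (u2 + k) + 1 / (1 + u2 * k) := by
  have hk0 : 0 < k := by linarith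
  have hu1 : 0 < u1 := by linarith
  have hu2 : 0 < u2 := by linarith
  have d1 : 0 < u1 + k := by linarith
  have d2 : 0 < u2 + k := by linarith
  have d3 : 0 < 1 + u1 * k := by positivity
  have d4 : 0 < 1 + u2 * k := by positivity
  rw [div_add_div _ _ (ne_of_gt d1) (ne_of_gt d3), div_add_div _ _ (ne_of_gt d2) (ne_of_gt d4),
    div_le_div_iff₀ (by positivity) (by positivity)]
  nlinarith [mul_nonneg (mul_nonneg (sub_nonneg.2 h) (sub_nonneg.2 hk))
      (sub_nonneg.2 (one_le_mul_of_one_le_of_one_le h1 (h1.trans h))),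
    mul_pos hk0 hk0, mul_nonneg (sub_nonneg.2 h) (sub_nonneg.2 hk),
    mul_nonneg (mul_nonneg (sub_nonneg.2 h) (sub_nonneg.2 hk)) (sub_nonneg.2 hk)]

theorem stmt_19 (ν ε : ℝ) (hν : 0 < ν) (hε : 0 < ε)
    (U : ℝ → ℝ)
    (hU : ∀ x, U x =
      (1 + Real.exp (-ν * (x - 2 * ε)))⁻¹ + (1 - (1 + Real.exp (-ν * (x + 2 * ε)))⁻¹)) :
    ∀ x₁ x₂ : ℝ, 0 ≤ x₁ → x₁ ≤ x₂ → U x₁ ≤ U x₂ := by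
  intro x₁ x₂ hx1 h12
  rw [hU x₁, hU x₂, aux_rewrite, aux_rewrite]
  apply aux_mono
  · rw [← Real.exp_zero]; exact Real.exp_le_exp.2 (by positivity)
  · rw [← Real.exp_zero]; exact Real.exp_le_exp.2 (by positivity)
  · exact Real.exp_le_exp.2 (by nlinarith)
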